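/- arXiv:1111.5947 — 5 statements merged into one kernel-verified Lean document; each statement's English description precedes it below -/
import Mathlib

section
/- If p and q are polynomials of degree at most n such that the integral of p over each subinterval [t_j, t_{j+1}] equals the integral of q over [t_j, t_{j+1}] for j = 0, 1, ..., n, where -1 = t_0 < t_1 < ... < t_{n+1} = 1, then p = q. -/
open Polynomial intervalIntegral

/-
The difference `r = p - q` has degree at most `n` and integral zero over each of the `n + 1`
intervals `[t_j, t_{j+1}]`. By the mean value theorem for integrals, `r` vanishes at some interior
point of each interval; these `n + 1` points are distinct, so `r = 0`.
-/

theorem exists_mem_Ioo_eq_zero_of_intervalIntegral_eq_zero {f : ℝ → ℝ} {a b : ℝ} (hab : a < b)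
    (hf : ContinuousOn f (Set.Icc a b)) (h : ∫ x in a..b, f x = 0) :
    ∃ c ∈ Set.Ioo a b, f c = 0 := by
  obtain ⟨c, hc, hfc⟩ := exists_eq_interval_average hab.ne (by rwa [Set.uIcc_of_lt hab])
  rw [Set.uIoo_of_lt hab] at hc
  exact ⟨c, hc, by rw [hfc, interval_average_eq_div, h, zero_div]⟩

theorem Polynomial.eq_zero_of_intervalIntegral_eq_zero {m : ℕ} (t : Fin (m + 1) → ℝ)
    (ht : StrictMono t) (r : ℝ[X]) (hr : r.natDegree < m)
    (h : ∀ j : Fin m, ∫ x in (t j.castSucc)..(t j.succ), r.eval x = 0) : r = 0 := by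
  have hroot : ∀ j : Fin m, ∃ c ∈ Set.Ioo (t j.castSucc) (t j.succ), r.eval c = 0 := fun j =>
    exists_mem_Ioo_eq_zero_of_intervalIntegral_eq_zero (ht Fin.castSucc_lt_succ)
      r.continuous.continuousOn (h j)
  choose c hc hc0 using hroot
  have hc_mono : StrictMono c := fun j k hjk =>
    calc c j < t j.succ := (hc j).2
      _ ≤ t k.castSucc := ht.monotone (Fin.succ_le_castSucc_iff.mpr hjk)
      _ < c k := (hc k).1
  exact eq_zero_of_natDegree_lt_card_of_eval_eq_zero r hc_mono.injective hc0
    (by rwa [Fintype.card_fin])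

theorem measure_preserving_poly_unique_general (n : ℕ) (t : Fin (n + 2) → ℝ)
    (ht : StrictMono t)
    (p q : ℝ[X]) (hp : p.degree ≤ n) (hq : q.degree ≤ n)
    (h : ∀ j : Fin (n + 1),
      (∫ x in (t j.castSucc)..(t j.succ), p.eval x) =
      ∫ x in (t j.castSucc)..(t j.succ), q.eval x) :
    p = q := by
  rw [← sub_eq_zero]
  refine (p - q).eq_zero_of_intervalIntegral_eq_zero t ht ?_ fun j => ?_
  · exact Nat.lt_succ_of_le (natDegree_le_of_degree_le ((degree_sub_le p q).trans (max_le hp hq)))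
  · simp only [eval_sub]
    rw [integral_sub (p.continuous.intervalIntegrable _ _) (q.continuous.intervalIntegrable _ _),
      h j, sub_self]

theorem measure_preserving_poly_unique (n : ℕ) (t : Fin (n + 2) → ℝ)
    (ht : StrictMono t) (ht0 : t 0 = -1) (htN : t (Fin.last (n + 1)) = 1)
    (p q : ℝ[X]) (hp : p.degree ≤ n) (hq : q.degree ≤ n)
    (h : ∀ j : Fin (n + 1),
      (∫ x in (t j.castSucc)..(t j.succ), p.eval x) =
      ∫ x in (t j.castSucc)..(t j.succ), q.eval x) :
    p = q :=
  measure_preserving_poly_unique_general n t ht p q hp hq h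
end

section
/- A polynomial of degree at most n whose integral vanishes over each of the n+1 subintervals [t_j, t_{j+1}], j = 0,...,n, of a partition -1 = t_0 < t_1 < ... < t_{n+1} = 1, is the zero polynomial. -/
open Polynomial intervalIntegral

theorem strictMono_of_mem_Ioo_castSucc_succ {α : Type*} [Preorder α] {m : ℕ}
    {t : Fin (m + 2) → α} (ht : Monotone t) {ξ : Fin (m + 1) → α}
    (hξ : ∀ j, ξ j ∈ Set.Ioo (t j.castSucc) (t j.succ)) : StrictMono ξ := fun j k hjk =>
  calc ξ j < t j.succ := (hξ j).2
    _ ≤ t k.castSucc := ht (Fin.succ_le_castSucc_iff.mpr hjk)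
    _ < ξ k := (hξ k).1

theorem vanishing_integrals_imp_zero_poly_general (n : ℕ) (t : Fin (n + 2) → ℝ)
    (ht : StrictMono t)
    (p : ℝ[X]) (hp : p.degree ≤ n)
    (h : ∀ j : Fin (n + 1),
      (∫ x in (t j.castSucc)..(t j.succ), p.eval x) = 0) :
    p = 0 := by
  have root_in_cell : ∀ j : Fin (n + 1), ∃ ξ ∈ Set.Ioo (t j.castSucc) (t j.succ), p.eval ξ = 0 :=
    fun j => exists_mem_Ioo_eq_zero_of_intervalIntegral_eq_zero (ht Fin.castSucc_lt_succ)
      p.continuous.continuousOn (h j)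
  choose ξ hξ hξ0 using root_in_cell
  refine p.eq_zero_of_natDegree_lt_card_of_eval_eq_zero
    (strictMono_of_mem_Ioo_castSucc_succ ht.monotone hξ).injective hξ0 ?_
  rw [Fintype.card_fin, Nat.lt_succ_iff]
  exact natDegree_le_of_degree_le hp

theorem vanishing_integrals_imp_zero_poly (n : ℕ) (t : Fin (n + 2) → ℝ)
    (ht : StrictMono t) (ht0 : t 0 = -1) (htN : t (Fin.last (n + 1)) = 1)
    (p : ℝ[X]) (hp : p.degree ≤ n)
    (h : ∀ j : Fin (n + 1),
      (∫ x in (t j.castSucc)..(t j.succ), p.eval x) = 0) :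
    p = 0 :=
  vanishing_integrals_imp_zero_poly_general n t ht p hp h
end

section
/- Given real numbers M_0, ..., M_n and a partition -1 = t_0 < t_1 < ... < t_{n+1} = 1, there exists a unique polynomial p of degree at most n satisfying ∫_{t_j}^{t_{j+1}} p(t) dt = M_j for all j = 0, ..., n. -/
/-!
The map sending `p` to its integrals over the `n + 1` subintervals is linear from the
`(n + 1)`-dimensional space of polynomials of degree at most `n` to `ℝ^(n+1)`, so it suffices to
show it is injective. If all these integrals vanish, the antiderivative `F` of `p` takes the same
value at the `n + 2` points `t i`; as `deg F ≤ n + 1`, `F` is constant and `p = F' = 0`.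
-/

open Polynomial

namespace Polynomial

section Antiderivative

variable {K : Type*} [Field K]

noncomputable def antideriv (p : K[X]) : K[X] :=
  p.sum fun k a => C (a / (k + 1)) * X ^ (k + 1)

theorem derivative_antideriv [CharZero K] (p : K[X]) : (antideriv p).derivative = p := by
  conv_rhs => rw [← p.sum_C_mul_X_pow_eq]
  rw [antideriv, Polynomial.sum, map_sum, Polynomial.sum]
  refine Finset.sum_congr rfl fun k _ => ?_
  rw [derivative_C_mul, derivative_X_pow, ← mul_assoc, ← C_mul]
  push_cast
  rw [div_mul_cancel₀ _ (Nat.cast_add_one_ne_zero k)]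

theorem natDegree_antideriv_le (p : K[X]) : (antideriv p).natDegree ≤ p.natDegree + 1 :=
  natDegree_sum_le_of_forall_le _ _ fun k hk =>
    (natDegree_C_mul_X_pow_le _ _).trans (Nat.succ_le_succ (le_natDegree_of_mem_supp k hk))

end Antiderivative

variable {R : Type*} [CommRing R]

noncomputable def degreeLEEquiv (n : ℕ) : degreeLE R n ≃ₗ[R] Fin (n + 1) → R :=
  (LinearEquiv.ofEq _ _ degreeLT_succ_eq_degreeLE.symm).trans (degreeLTEquiv R (n + 1))

theorem integral_eval_eq_sub_antideriv (p : ℝ[X]) (a b : ℝ) :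
    ∫ x in a..b, p.eval x = (antideriv p).eval b - (antideriv p).eval a :=
  intervalIntegral.integral_eq_sub_of_hasDerivAt
    (fun x _ => by simpa only [derivative_antideriv] using (antideriv p).hasDerivAt x)
    (p.continuous.intervalIntegrable _ _)

noncomputable def intervalIntegralLinearMap (a b : ℝ) : ℝ[X] →ₗ[ℝ] ℝ where
  toFun p := ∫ x in a..b, p.eval x
  map_add' p q := by
    simp only [eval_add]
    exact intervalIntegral.integral_add (p.continuous.intervalIntegrable _ _)
      (q.continuous.intervalIntegrable _ _)
  map_smul' c p := by simp [intervalIntegral.integral_const_mul]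

theorem eq_zero_of_forall_integral_eval_eq_zero {n : ℕ} {t : Fin (n + 2) → ℝ}
    (ht : Function.Injective t) {p : ℝ[X]} (hp : p.degree ≤ n)
    (hint : ∀ j : Fin (n + 1), ∫ x in (t j.castSucc)..(t j.succ), p.eval x = 0) : p = 0 := by
  set F := antideriv p
  have hF : ∀ i, F.eval (t i) = F.eval (t 0) := by
    intro i
    induction i using Fin.induction with
    | zero => rfl
    | succ j ih => rw [← ih, ← sub_eq_zero, ← integral_eval_eq_sub_antideriv, hint j]
  have hF_const : F - C (F.eval (t 0)) = 0 := by
    refine eq_zero_of_natDegree_lt_card_of_eval_eq_zero _ ht (fun i => by simp [hF i]) ?_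
    have : F.natDegree ≤ p.natDegree + 1 := natDegree_antideriv_le p
    have := natDegree_le_iff_degree_le.2 hp
    rw [natDegree_sub_C, Fintype.card_fin]
    omega
  simpa [F, derivative_antideriv] using congrArg derivative hF_const

end Polynomial

theorem exists_unique_measure_preserving_poly_general (n : ℕ) (t : Fin (n + 2) → ℝ)
    (ht : StrictMono t)
    (M : Fin (n + 1) → ℝ) :
    ∃! p : ℝ[X], p.degree ≤ n ∧ ∀ j : Fin (n + 1),
      (∫ x in (t j.castSucc)..(t j.succ), p.eval x) = M j := by
  let T : degreeLE ℝ n →ₗ[ℝ] Fin (n + 1) → ℝ :=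
    (LinearMap.pi fun j => intervalIntegralLinearMap (t j.castSucc) (t j.succ)).comp
      (degreeLE ℝ n).subtype
  have hinj : Function.Injective T := by
    rw [← LinearMap.ker_eq_bot, LinearMap.ker_eq_bot']
    exact fun p hp => Subtype.ext <|
      eq_zero_of_forall_integral_eval_eq_zero ht.injective (mem_degreeLE.1 p.2) (congrFun hp)
  have e := degreeLEEquiv (R := ℝ) n
  have : FiniteDimensional ℝ (degreeLE ℝ n) := e.symm.finiteDimensional
  obtain ⟨p, hp⟩ :=
    (LinearMap.injective_iff_surjective_of_finrank_eq_finrank e.finrank_eq).1 hinj M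
  refine ⟨p, ⟨mem_degreeLE.1 p.2, congrFun hp⟩, fun q ⟨hq, hqM⟩ => ?_⟩
  have : T ⟨q, mem_degreeLE.2 hq⟩ = T p := hp ▸ funext hqM
  exact congrArg Subtype.val (hinj this)

theorem exists_unique_measure_preserving_poly (n : ℕ) (t : Fin (n + 2) → ℝ)
    (ht : StrictMono t) (ht0 : t 0 = -1) (htN : t (Fin.last (n + 1)) = 1)
    (M : Fin (n + 1) → ℝ) :
    ∃! p : ℝ[X], p.degree ≤ n ∧ ∀ j : Fin (n + 1),
      (∫ x in (t j.castSucc)..(t j.succ), p.eval x) = M j :=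
  exists_unique_measure_preserving_poly_general n t ht M
end

section
/- Let D ∈ C^{n+1}[-1,1] and let p be the polynomial of degree at most n satisfying ∫_{t_j}^{t_{j+1}} p dt = ∫_{t_j}^{t_{j+1}} D dt for all j, with -1 = t_0 < ... < t_{n+1} = 1. Then for every t ∈ [-1,1] there exist points τ_0 < ... < τ_n with τ_j ∈ (t_j, t_{j+1}) and ξ ∈ (-1,1) such that D(t) - p(t) = D^{(n+1)}(ξ) / (n+1)! · ∏_{j=0}^{n} (t - τ_j). -/
/-!
On each cell `[t j, t (j + 1)]` the function `D - p` has zero mean, so by the mean value theorem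
for integrals it vanishes at an interior point `τ j`: `p` interpolates `D` at `n + 1` distinct
nodes, and the classical Lagrange remainder applies. For `x` off the nodes, the polynomial
`p + λ ∏ (X - τ j)` with `λ` chosen to match `D` at `x` agrees with `D` at `n + 2` points, so by
repeated Rolle the `(n + 1)`-st derivative of the difference, `D⁽ⁿ⁺¹⁾ - (n + 1)! λ`, vanishes
somewhere in `(-1, 1)`.
-/

open Polynomial Set

namespace Polynomial

theorem iterate_derivative_eq_C_of_natDegree_le {R : Type*} [Semiring R] {p : R[X]} {k : ℕ}
    (hp : p.natDegree ≤ k) : derivative^[k] p = C (k.factorial * p.coeff k) := by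
  have hdeg : (derivative^[k] p).natDegree = 0 :=
    Nat.le_zero.mp ((natDegree_iterate_derivative p k).trans (by omega))
  rw [eq_C_of_natDegree_eq_zero hdeg, coeff_iterate_derivative, zero_add,
    Nat.descFactorial_self, nsmul_eq_mul]

variable {𝕜 : Type*} [NontriviallyNormedField 𝕜]

theorem iteratedDeriv_eval (p : 𝕜[X]) (k : ℕ) :
    iteratedDeriv k (fun x => p.eval x) = fun x => (derivative^[k] p).eval x := by
  induction k generalizing p with
  | zero => simp
  | succ k ih =>
    have hderiv : deriv (fun x => p.eval x) = fun x => p.derivative.eval x := by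
      ext; exact Polynomial.deriv p
    rw [iteratedDeriv_succ', hderiv, ih, Function.iterate_succ]
    rfl

theorem iteratedDerivWithin_eval (p : 𝕜[X]) (k : ℕ) {s : Set 𝕜} (hs : UniqueDiffOn 𝕜 s)
    {x : 𝕜} (hx : x ∈ s) :
    iteratedDerivWithin k (fun x => p.eval x) s x = (derivative^[k] p).eval x := by
  have hp : ContDiff 𝕜 k fun x => p.eval x := by simpa using p.contDiff_aeval (𝕜 := 𝕜) k
  rw [iteratedDerivWithin_eq_iteratedDeriv hs hp.contDiffAt hx, iteratedDeriv_eval]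

end Polynomial

theorem strictMono_of_mem_Ioo_castSucc_succ_s12 {α : Type*} [Preorder α] {m : ℕ}
    {s : Fin (m + 1) → α} (hs : Monotone s) {σ : Fin m → α}
    (hσ : ∀ i, σ i ∈ Ioo (s i.castSucc) (s i.succ)) : StrictMono σ := fun i j hij =>
  calc σ i < s i.succ := (hσ i).2
    _ ≤ s j.castSucc := hs (Fin.succ_le_castSucc_iff.mpr hij)
    _ < σ j := (hσ j).1

section Rolle

variable {a b : ℝ} {f : ℝ → ℝ}

theorem exists_mem_Ioo_derivWithin_Icc_eq_zero (hf : ContinuousOn f (Icc a b)) {x y : ℝ}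
    (hx : x ∈ Icc a b) (hy : y ∈ Icc a b) (hxy : x < y) (hfxy : f x = f y) :
    ∃ c ∈ Ioo x y, derivWithin f (Icc a b) c = 0 := by
  obtain ⟨c, hc, hc0⟩ := exists_deriv_eq_zero hxy (hf.mono (Icc_subset_Icc hx.1 hy.2)) hfxy
  refine ⟨c, hc, ?_⟩
  rwa [derivWithin_of_mem_nhds (Icc_mem_nhds (hx.1.trans_lt hc.1) (hc.2.trans_le hy.2))]

theorem exists_iteratedDerivWithin_Icc_eq_zero_of_strictMono (hab : a < b) (k : ℕ)
    (hf : ContDiffOn ℝ (k + 1) f (Icc a b)) {s : Fin (k + 2) → ℝ} (hs : StrictMono s)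
    (hsab : ∀ i, s i ∈ Icc a b) (hfs : ∀ i, f (s i) = 0) :
    ∃ ξ ∈ Ioo a b, iteratedDerivWithin (k + 1) f (Icc a b) ξ = 0 := by
  induction k generalizing f with
  | zero =>
    obtain ⟨c, hc, hc0⟩ := exists_mem_Ioo_derivWithin_Icc_eq_zero hf.continuousOn (hsab 0)
      (hsab 1) (hs zero_lt_one) ((hfs 0).trans (hfs 1).symm)
    exact ⟨c, ⟨(hsab 0).1.trans_lt hc.1, hc.2.trans_le (hsab 1).2⟩,
      by rwa [iteratedDerivWithin_one]⟩
  | succ k ih =>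
    have hcrit : ∀ i : Fin (k + 2), ∃ c ∈ Ioo (s i.castSucc) (s i.succ),
        derivWithin f (Icc a b) c = 0 := fun i =>
      exists_mem_Ioo_derivWithin_Icc_eq_zero hf.continuousOn (hsab _) (hsab _)
        (hs i.castSucc_lt_succ) ((hfs _).trans (hfs _).symm)
    choose σ hσs hσ0 using hcrit
    have hσab : ∀ i, σ i ∈ Icc a b := fun i =>
      Icc_subset_Icc (hsab _).1 (hsab _).2 (Ioo_subset_Icc_self (hσs i))
    have hf' : ContDiffOn ℝ (k + 1) (derivWithin f (Icc a b)) (Icc a b) :=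
      hf.derivWithin (uniqueDiffOn_Icc hab) (by norm_cast)
    obtain ⟨ξ, hξ, hξ0⟩ :=
      ih hf' (strictMono_of_mem_Ioo_castSucc_succ_s12 hs.monotone hσs) hσab hσ0
    exact ⟨ξ, hξ, by rwa [iteratedDerivWithin_succ']⟩

theorem exists_iteratedDerivWithin_Icc_eq_zero (hab : a < b) (k : ℕ)
    (hf : ContDiffOn ℝ (k + 1) f (Icc a b)) {Z : Finset ℝ} (hZ : Z.card = k + 2)
    (hZab : ∀ z ∈ Z, z ∈ Icc a b) (hfZ : ∀ z ∈ Z, f z = 0) :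
    ∃ ξ ∈ Ioo a b, iteratedDerivWithin (k + 1) f (Icc a b) ξ = 0 :=
  exists_iteratedDerivWithin_Icc_eq_zero_of_strictMono hab k hf (Z.orderEmbOfFin hZ).strictMono
    (fun i => hZab _ (Z.orderEmbOfFin_mem hZ i)) (fun i => hfZ _ (Z.orderEmbOfFin_mem hZ i))

end Rolle

theorem exists_mem_Ioo_eq_of_intervalIntegral_eq {f g : ℝ → ℝ} {a b : ℝ} (hab : a < b)
    (hf : ContinuousOn f (Icc a b)) (hg : ContinuousOn g (Icc a b))
    (h : ∫ x in a..b, f x = ∫ x in a..b, g x) : ∃ c ∈ Ioo a b, f c = g c := by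
  rw [← uIcc_of_le hab.le] at hf hg
  obtain ⟨c, hc, hfgc⟩ := exists_eq_interval_average hab.ne (hf.sub hg)
  refine ⟨c, uIoo_of_le hab.le ▸ hc, sub_eq_zero.mp ?_⟩
  rw [← Pi.sub_apply, hfgc, interval_average_eq_div, Pi.sub_def, intervalIntegral.integral_sub
    hf.intervalIntegrable hg.intervalIntegrable, h, sub_self, zero_div]

theorem Lagrange.iterate_derivative_card_nodal {R ι : Type*} [CommRing R] [Nontrivial R]
    (s : Finset ι) (v : ι → R) :
    derivative^[s.card] (Lagrange.nodal s v) = C (s.card.factorial : R) := by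
  have hdeg := Lagrange.natDegree_nodal (s := s) (v := v)
  rw [iterate_derivative_eq_C_of_natDegree_le hdeg.le, ← hdeg,
    Lagrange.nodal_monic.coeff_natDegree, mul_one]

theorem exists_sub_eval_eq_iteratedDerivWithin_mul_prod {a b : ℝ} (hab : a < b) {n : ℕ}
    {f : ℝ → ℝ} (hf : ContDiffOn ℝ (n + 1) f (Icc a b)) {p : ℝ[X]} (hp : p.natDegree ≤ n)
    {τ : Fin (n + 1) → ℝ} (hτ : Function.Injective τ) (hτab : ∀ j, τ j ∈ Icc a b)
    (hfτ : ∀ j, f (τ j) = p.eval (τ j)) {x : ℝ} (hx : x ∈ Icc a b) :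
    ∃ ξ ∈ Ioo a b, f x - p.eval x =
      iteratedDerivWithin (n + 1) f (Icc a b) ξ / (n + 1).factorial * ∏ j, (x - τ j) := by
  by_cases hxτ : x ∈ range τ
  · obtain ⟨j, rfl⟩ := hxτ
    refine ⟨(a + b) / 2, ⟨by linarith, by linarith⟩, ?_⟩
    rw [hfτ j, sub_self, Finset.prod_eq_zero (Finset.mem_univ j) (sub_self _), mul_zero]
  have hprod : ∏ j, (x - τ j) ≠ 0 :=
    Finset.prod_ne_zero_iff.mpr fun j _ => sub_ne_zero.mpr fun h => hxτ ⟨j, h.symm⟩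
  set lam := (f x - p.eval x) / ∏ j, (x - τ j)
  set Q := p + C lam * Lagrange.nodal Finset.univ τ
  have hQ : ∀ y, Q.eval y = p.eval y + lam * ∏ j, (y - τ j) := fun y => by
    simp [Q, Lagrange.eval_nodal]
  have hQx : Q.eval x = f x := by rw [hQ, div_mul_cancel₀ _ hprod, add_sub_cancel]
  have hQτ : ∀ j, Q.eval (τ j) = f (τ j) := fun j => by
    rw [hQ, Finset.prod_eq_zero (Finset.mem_univ j) (sub_self _), mul_zero, add_zero, hfτ]
  have hQ_iterate : derivative^[n + 1] Q = C ((n + 1).factorial * lam) := by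
    have hnodal := Lagrange.iterate_derivative_card_nodal Finset.univ τ
    rw [Finset.card_fin] at hnodal
    rw [iterate_map_add, iterate_derivative_eq_zero (by omega), iterate_derivative_C_mul, hnodal,
      zero_add, ← C_mul, mul_comm]
  have hZ : (insert x (Finset.univ.image τ)).card = n + 2 := by
    rw [Finset.card_insert_of_notMem (by simpa using hxτ), Finset.card_image_of_injective _ hτ,
      Finset.card_fin]
  have hQc : ContDiff ℝ (n + 1) fun y => Q.eval y := by
    simpa using Q.contDiff_aeval (𝕜 := ℝ) (n + 1)
  obtain ⟨ξ, hξ, hξ0⟩ := exists_iteratedDerivWithin_Icc_eq_zero hab n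
    (f := f - fun y => Q.eval y) (hf.sub hQc.contDiffOn) hZ
    (by rw [Finset.forall_mem_insert, Finset.forall_mem_image]; exact ⟨hx, fun j _ => hτab j⟩)
    (by
      rw [Finset.forall_mem_insert, Finset.forall_mem_image]
      exact ⟨sub_eq_zero.mpr hQx.symm, fun j _ => sub_eq_zero.mpr (hQτ j).symm⟩)
  have hξab : ξ ∈ Icc a b := Ioo_subset_Icc_self hξ
  rw [iteratedDerivWithin_sub hξab (uniqueDiffOn_Icc hab) (hf.contDiffWithinAt hξab)
    hQc.contDiffWithinAt, Q.iteratedDerivWithin_eval _ (uniqueDiffOn_Icc hab) hξab, hQ_iterate,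
    eval_C, sub_eq_zero] at hξ0
  refine ⟨ξ, hξ, ?_⟩
  rw [hξ0, mul_div_cancel_left₀ _ (by positivity)]
  exact (div_mul_cancel₀ _ hprod).symm

theorem measure_preserving_poly_error (n : ℕ) (t : Fin (n + 2) → ℝ)
    (ht : StrictMono t) (ht0 : t 0 = -1) (htN : t (Fin.last (n + 1)) = 1)
    (D : ℝ → ℝ) (hD : ContDiffOn ℝ (n + 1) D (Set.Icc (-1) 1))
    (p : ℝ[X]) (hdeg : p.degree ≤ n)
    (hint : ∀ j : Fin (n + 1),
      (∫ x in (t j.castSucc)..(t j.succ), p.eval x) =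
        ∫ x in (t j.castSucc)..(t j.succ), D x) :
    ∀ x ∈ Set.Icc (-1 : ℝ) 1, ∃ τ : Fin (n + 1) → ℝ, StrictMono τ ∧
      (∀ j, τ j ∈ Set.Ioo (t j.castSucc) (t j.succ)) ∧
      ∃ ξ ∈ Set.Ioo (-1 : ℝ) 1,
        D x - p.eval x =
          iteratedDerivWithin (n + 1) D (Set.Icc (-1) 1) ξ / (n + 1).factorial *
            ∏ j, (x - τ j) := by
  intro x hx
  have hsub : ∀ j : Fin (n + 1), Icc (t j.castSucc) (t j.succ) ⊆ Icc (-1) 1 := fun j =>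
    Icc_subset_Icc (ht0 ▸ ht.monotone (Fin.zero_le _)) (htN ▸ ht.monotone (Fin.le_last _))
  have hnode : ∀ j : Fin (n + 1), ∃ c ∈ Ioo (t j.castSucc) (t j.succ), D c = p.eval c :=
    fun j => exists_mem_Ioo_eq_of_intervalIntegral_eq (ht j.castSucc_lt_succ)
      (hD.continuousOn.mono (hsub j)) p.continuous.continuousOn (hint j).symm
  choose τ hτt hDτ using hnode
  have hτ : StrictMono τ := strictMono_of_mem_Ioo_castSucc_succ_s12 ht.monotone hτt
  obtain ⟨ξ, hξ, herr⟩ := exists_sub_eval_eq_iteratedDerivWithin_mul_prod (by norm_num) hD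
    (natDegree_le_iff_degree_le.mpr hdeg) hτ.injective
    (fun j => hsub j (Ioo_subset_Icc_self (hτt j))) hDτ hx
  exact ⟨τ, hτ, hτt, ξ, hξ, herr⟩
end

section
/- The map g₁ : [0,1] → [0,1] defined by g₁(x) = 2x/(1-x²) for 0 ≤ x ≤ √2 - 1 and g₁(x) = (1-x²)/(2x) for √2 - 1 ≤ x ≤ 1 preserves the absolutely continuous measure with density d₁(x) = 4/(π(1+x²)): for every interval [a,b] ⊆ [0,1], ∫_{g₁^{-1}([a,b])} d₁(x) dx = ∫_a^b d₁(x) dx. -/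
/-!
In the angle coordinate `θ = arctan x`, which maps `[0, 1]` onto `[0, π/4]`, the density `d₁`
becomes the constant `4/π` (as `d(arctan x) = dx / (1 + x²)`), and, by the double angle formula
for `tan` together with `tan (π/8) = √2 - 1`, the map `g₁` becomes the tent map
`θ ↦ 2θ` on `[0, π/8]`, `θ ↦ π/2 - 2θ` on `[π/8, π/4]`. The tent map pulls an interval
`[A, B]` back to two intervals of length `(B - A)/2` each, so it preserves Lebesgue measure.
-/

open MeasureTheory Real Set

noncomputable def g₁ (x : ℝ) : ℝ :=
  if x ≤ √2 - 1 then 2 * x / (1 - x ^ 2) else (1 - x ^ 2) / (2 * x)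

noncomputable def d₁ (x : ℝ) : ℝ := 4 / (π * (1 + x ^ 2))

noncomputable def tent (θ : ℝ) : ℝ := if θ ≤ π / 8 then 2 * θ else π / 2 - 2 * θ

theorem MeasureTheory.aedisjoint_Icc_Icc_of_le {α : Type*} [LinearOrder α] [MeasurableSpace α]
    {μ : Measure α} [NullSingletonClass μ] {p q r s : α} (h : q ≤ r) :
    AEDisjoint μ (Icc p q) (Icc r s) :=
  measure_mono_null (fun _ hx => le_antisymm hx.1.2 (h.trans hx.2.1)) (measure_singleton q)

lemma Icc_zero_pi_div_four_subset : Icc 0 (π / 4) ⊆ Ioo (-(π / 2)) (π / 2) :=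
  Icc_subset_Ioo (by linarith [pi_pos]) (by linarith [pi_pos])

lemma tan_mem_Icc_iff {y : ℝ} (hy : y ∈ Ioo (-(π / 2)) (π / 2)) (a b : ℝ) :
    tan y ∈ Icc a b ↔ y ∈ Icc (arctan a) (arctan b) := by
  rw [mem_Icc, mem_Icc, ← arctan_strictMono.le_iff_le (b := tan y),
    ← arctan_strictMono.le_iff_le (a := tan y), arctan_tan hy.1 hy.2]

lemma arctan_preimage_Icc {α β : ℝ} (hα : α ∈ Ioo (-(π / 2)) (π / 2))
    (hβ : β ∈ Ioo (-(π / 2)) (π / 2)) : arctan ⁻¹' Icc α β = Icc (tan α) (tan β) := by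
  ext x
  have h := tan_mem_Icc_iff (arctan_mem_Ioo x) (tan α) (tan β)
  rw [tan_arctan, arctan_tan hα.1 hα.2, arctan_tan hβ.1 hβ.2] at h
  exact h.symm

lemma arctan_mem_Icc_zero_pi_div_four_iff (x : ℝ) :
    arctan x ∈ Icc 0 (π / 4) ↔ x ∈ Icc 0 1 := by
  simpa [tan_arctan, arctan_zero, arctan_one] using
    (tan_mem_Icc_iff (arctan_mem_Ioo x) 0 1).symm

lemma tan_pi_div_eight : tan (π / 8) = √2 - 1 := by
  set t := tan (π / 8)
  have ht0 : 0 < t := tan_pos_of_pos_of_lt_pi_div_two (by positivity) (by linarith [pi_pos])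
  have ht1 : t < 1 := by
    rw [← tan_pi_div_four]
    exact tan_lt_tan_of_nonneg_of_lt_pi_div_two (by positivity) (by linarith [pi_pos])
      (by linarith [pi_pos])
  have hdouble : 2 * t / (1 - t ^ 2) = 1 := by
    rw [← tan_two_mul, ← tan_pi_div_four]
    ring_nf
  have hquad : (t + 1) ^ 2 = 2 := by
    rw [div_eq_one_iff_eq (by nlinarith)] at hdouble
    linear_combination hdouble
  rw [← hquad, sqrt_sq (by linarith)]
  ring

lemma tan_le_sqrt_two_sub_one_iff {θ : ℝ} (hθ : θ ∈ Icc 0 (π / 4)) :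
    tan θ ≤ √2 - 1 ↔ θ ≤ π / 8 := by
  rw [← tan_pi_div_eight]
  exact strictMonoOn_tan.le_iff_le (Icc_zero_pi_div_four_subset hθ)
    (Icc_zero_pi_div_four_subset ⟨by positivity, by linarith [pi_pos]⟩)

lemma g₁_tan {θ : ℝ} (hθ : θ ∈ Icc 0 (π / 4)) : g₁ (tan θ) = tan (tent θ) := by
  simp only [g₁, tent, tan_le_sqrt_two_sub_one_iff hθ]
  split_ifs
  · rw [tan_two_mul]
  · rw [tan_pi_div_two_sub, tan_two_mul, inv_div]

lemma tent_mem_Icc {θ : ℝ} (hθ : θ ∈ Icc 0 (π / 4)) : tent θ ∈ Icc 0 (π / 4) := by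
  obtain ⟨h0, h1⟩ := hθ
  unfold tent
  split_ifs <;> constructor <;> linarith

lemma tent_preimage_Icc_inter {A B : ℝ} (hA : 0 ≤ A) (hAB : A ≤ B) (hB : B ≤ π / 4) :
    tent ⁻¹' Icc A B ∩ Icc 0 (π / 4) =
      Icc (A / 2) (B / 2) ∪ Icc (π / 4 - B / 2) (π / 4 - A / 2) := by
  ext θ
  simp only [tent, mem_inter_iff, mem_preimage, mem_Icc, mem_union]
  split_ifs with h
  · constructor
    · rintro ⟨⟨h1, h2⟩, -⟩
      exact Or.inl ⟨by linarith, by linarith⟩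
    · rintro (⟨h1, h2⟩ | ⟨h1, h2⟩) <;> refine ⟨⟨?_, ?_⟩, ?_, ?_⟩ <;> linarith
  · constructor
    · rintro ⟨⟨h1, h2⟩, -, h3⟩
      exact Or.inr ⟨by linarith, by linarith⟩
    · rintro (⟨h1, h2⟩ | ⟨h1, h2⟩) <;> refine ⟨⟨?_, ?_⟩, ?_, ?_⟩ <;> linarith

lemma g₁_preimage_Icc_inter (a b : ℝ) :
    g₁ ⁻¹' Icc a b ∩ Icc 0 1 =
      arctan ⁻¹' (tent ⁻¹' Icc (arctan a) (arctan b) ∩ Icc 0 (π / 4)) := by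
  ext x
  simp only [mem_inter_iff, mem_preimage, ← arctan_mem_Icc_zero_pi_div_four_iff x]
  refine and_congr_left fun hx => ?_
  have hg := g₁_tan hx
  rw [tan_arctan] at hg
  rw [hg]
  exact tan_mem_Icc_iff (Icc_zero_pi_div_four_subset (tent_mem_Icc hx)) a b

lemma continuous_d₁ : Continuous d₁ :=
  continuous_const.div (by fun_prop) fun x => by positivity

lemma integral_d₁_Icc {p q : ℝ} (h : p ≤ q) :
    ∫ x in Icc p q, d₁ x = 4 / π * (arctan q - arctan p) := by
  have hd : d₁ = fun x => 4 / π * (1 / (1 + x ^ 2)) := by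
    ext x
    rw [d₁, div_mul_div_comm, mul_one]
  rw [integral_Icc_eq_integral_Ioc, ← intervalIntegral.integral_of_le h, hd,
    intervalIntegral.integral_const_mul, integral_one_div_one_add_sq]

lemma integral_d₁_Icc_tan {α β : ℝ} (hα : α ∈ Ioo (-(π / 2)) (π / 2))
    (hβ : β ∈ Ioo (-(π / 2)) (π / 2)) (h : α ≤ β) :
    ∫ x in Icc (tan α) (tan β), d₁ x = 4 / π * (β - α) := by
  rw [integral_d₁_Icc (strictMonoOn_tan.monotoneOn hα hβ h), arctan_tan hα.1 hα.2,
    arctan_tan hβ.1 hβ.2]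

theorem g1_preserves_d1 :
    let g : ℝ → ℝ := fun x =>
      if x ≤ Real.sqrt 2 - 1 then 2 * x / (1 - x ^ 2) else (1 - x ^ 2) / (2 * x)
    let d : ℝ → ℝ := fun x => 4 / (Real.pi * (1 + x ^ 2))
    ∀ a b : ℝ, 0 ≤ a → a ≤ b → b ≤ 1 →
      (∫ x in g ⁻¹' Set.Icc a b ∩ Set.Icc 0 1, d x) = ∫ x in Set.Icc a b, d x := by
  intro g d a b ha hab hb
  show ∫ x in g₁ ⁻¹' Icc a b ∩ Icc 0 1, d₁ x = ∫ x in Icc a b, d₁ x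
  obtain ⟨hA₀, -⟩ := (arctan_mem_Icc_zero_pi_div_four_iff a).2 ⟨ha, hab.trans hb⟩
  obtain ⟨-, hB₀⟩ := (arctan_mem_Icc_zero_pi_div_four_iff b).2 ⟨ha.trans hab, hb⟩
  have hAB := arctan_strictMono.monotone hab
  set A := arctan a
  set B := arctan b
  have hπ := pi_pos
  have hIoo {θ : ℝ} (h₀ : 0 ≤ θ) (h₁ : θ ≤ π / 4) : θ ∈ Ioo (-(π / 2)) (π / 2) :=
    Icc_zero_pi_div_four_subset ⟨h₀, h₁⟩
  have hA₁ := hIoo (θ := A / 2) (by linarith) (by linarith)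
  have hB₁ := hIoo (θ := B / 2) (by linarith) (by linarith)
  have hA₂ := hIoo (θ := π / 4 - A / 2) (by linarith) (by linarith)
  have hB₂ := hIoo (θ := π / 4 - B / 2) (by linarith) (by linarith)
  have hdisj : AEDisjoint volume (Icc (tan (A / 2)) (tan (B / 2)))
      (Icc (tan (π / 4 - B / 2)) (tan (π / 4 - A / 2))) :=
    aedisjoint_Icc_Icc_of_le (strictMonoOn_tan.monotoneOn hB₁ hB₂ (by linarith))
  rw [g₁_preimage_Icc_inter, tent_preimage_Icc_inter hA₀ hAB hB₀, preimage_union,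
    arctan_preimage_Icc hA₁ hB₁, arctan_preimage_Icc hB₂ hA₂,
    setIntegral_union₀ hdisj measurableSet_Icc.nullMeasurableSet
      continuous_d₁.integrableOn_Icc continuous_d₁.integrableOn_Icc,
    integral_d₁_Icc_tan hA₁ hB₁ (by linarith),
    integral_d₁_Icc_tan hB₂ hA₂ (by linarith), integral_d₁_Icc hab]
  ring
end
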